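/- arXiv:1304.5714 — 2 statements merged into one kernel-verified Lean document; each statement's English description precedes it below -/
import Mathlib

section
/- Let A be a reduced DFA recognizing a k-generalized definite language. Then A avoids pattern P_g: there are no distinct states p ≠ q, and words x, y ∈ Σ⁺, with p·x = p, q·x = q, and p·y = q. -/
/-- State `q` is reachable from `p` in the DFA `M`. -/
def Reach {α σ : Type*} (M : DFA α σ) (p q : σ) : Prop :=
  ∃ x : List α, M.evalFrom p x = q

/-- A DFA is reduced if it is connected and all pairs of distinct states are
distinguishable by some word. -/
def Reduced {α σ : Type*} (M : DFA α σ) : Prop :=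
  (∀ q : σ, ∃ x : List α, M.evalFrom M.start x = q) ∧
  (∀ p q : σ, p ≠ q → ∃ w : List α,
    ¬ (M.evalFrom p w ∈ M.accept ↔ M.evalFrom q w ∈ M.accept))

/-- `C` is a strongly connected component (class of mutual reachability) of `M`. -/
def IsComponent {α σ : Type*} (M : DFA α σ) (C : Set σ) : Prop :=
  ∃ p : σ, C = {q | Reach M p q ∧ Reach M q p}

/-- A component is a sink if it is closed under all letters. -/
def IsSink {α σ : Type*} (M : DFA α σ) (C : Set σ) : Prop :=
  IsComponent M C ∧ ∀ q ∈ C, ∀ a : α, M.step q a ∈ C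

/-- A component is trivial if it is a singleton `{p}` with `p·a ≠ p` for every letter `a`. -/
def IsTrivialComponent {α σ : Type*} (M : DFA α σ) (C : Set σ) : Prop :=
  IsComponent M C ∧ ∃ p : σ, C = {p} ∧ ∀ a : α, M.step p a ≠ p

/-- `f` is non-permutational on `C`: no subset `D ⊆ C` with `|D| > 1` is mapped
bijectively onto itself by `f`. -/
def NonPermutationalOn {σ : Type*} (f : σ → σ) (C : Set σ) : Prop :=
  ¬ ∃ D : Set σ, D ⊆ C ∧ 1 < D.ncard ∧ Set.BijOn f D D

/-- The automaton avoids pattern `P_d`. -/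
def AvoidsPd {α σ : Type*} (M : DFA α σ) : Prop :=
  ¬ ∃ (p q : σ) (x : List α), p ≠ q ∧ x ≠ [] ∧
    M.evalFrom p x = p ∧ M.evalFrom q x = q

/-- The automaton avoids pattern `P_g`. -/
def AvoidsPg {α σ : Type*} (M : DFA α σ) : Prop :=
  ¬ ∃ (p q : σ) (x y : List α), p ≠ q ∧ x ≠ [] ∧ y ≠ [] ∧
    M.evalFrom p x = p ∧ M.evalFrom q x = q ∧ M.evalFrom p y = q

/-- A language is k-generalized definite if membership only depends on the prefix and
suffix of length k. -/
def IsKGenDefinite {α : Type*} (k : ℕ) (L : Language α) : Prop :=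
  ∀ x₁ x₂ y : List α, x₁.length = k → x₂.length = k →
    (x₁ ++ y ++ x₂ ∈ L ↔ x₁ ++ x₂ ∈ L)

/-!
If `p·x = p`, `q·x = q` and `p·y = q`, put `X = xᵏ`, reach `p` by a word `u` and let `w`
distinguish `p` from `q`. The words `uX·y·Xw` and `uX·Xw` share their prefix and suffix of
length `k`, so k-generalized definiteness gives them the same membership; but the first leads
from the start state to `q·w` and the second to `p·w`.
-/

theorem IsKGenDefinite.append_append_mem_iff {α : Type*} {k : ℕ} {L : Language α}
    (hL : IsKGenDefinite k L) {a b : List α} (ha : k ≤ a.length) (hb : k ≤ b.length)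
    (y : List α) : a ++ y ++ b ∈ L ↔ a ++ b ∈ L := by
  obtain ⟨a₁, a₂, rfl, ha₁⟩ : ∃ a₁ a₂, a = a₁ ++ a₂ ∧ a₁.length = k :=
    ⟨a.take k, a.drop k, (List.take_append_drop k a).symm, List.length_take_of_le ha⟩
  obtain ⟨b₁, b₂, rfl, hb₂⟩ : ∃ b₁ b₂, b = b₁ ++ b₂ ∧ b₂.length = k :=
    ⟨b.take (b.length - k), b.drop (b.length - k), (List.take_append_drop _ b).symm,
      by rw [List.length_drop]; omega⟩
  have hcore (z : List α) : a₁ ++ z ++ b₂ ∈ L ↔ a₁ ++ b₂ ∈ L := hL a₁ b₂ z ha₁ hb₂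
  simpa only [List.append_assoc] using (hcore (a₂ ++ y ++ b₁)).trans (hcore (a₂ ++ b₁)).symm

theorem List.le_length_flatten_replicate {α : Type*} {x : List α} (hx : x ≠ []) (n : ℕ) :
    n ≤ (List.replicate n x).flatten.length := by
  simp only [List.length_flatten, List.map_replicate, List.sum_replicate, smul_eq_mul]
  exact Nat.le_mul_of_pos_right n (List.length_pos_iff.mpr hx)

theorem DFA.evalFrom_flatten_replicate {α σ : Type*} (M : DFA α σ) {s : σ} {x : List α}
    (hx : M.evalFrom s x = s) (n : ℕ) : M.evalFrom s (List.replicate n x).flatten = s :=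
  M.evalFrom_of_pow hx <| Language.mem_kstar.mpr
    ⟨_, rfl, fun _ hz => Set.mem_singleton_iff.mpr (List.eq_of_mem_replicate hz)⟩

theorem genDefinite_avoids_Pg {α σ : Type*} (M : DFA α σ) (k : ℕ)
    (hred : Reduced M) (hdef : IsKGenDefinite k M.accepts) :
    AvoidsPg M := by
  rintro ⟨p, q, x, y, hpq, hx, -, hpx, hqx, hpy⟩
  obtain ⟨u, hu⟩ := hred.1 p
  obtain ⟨w, hw⟩ := hred.2 p q hpq
  set X := (List.replicate k x).flatten
  have hXp : M.evalFrom p X = p := M.evalFrom_flatten_replicate hpx k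
  have hXq : M.evalFrom q X = q := M.evalFrom_flatten_replicate hqx k
  have hX : k ≤ X.length := List.le_length_flatten_replicate hx k
  have hmem := hdef.append_append_mem_iff (a := u ++ X) (b := X ++ w)
    (by rw [List.length_append]; omega) (by rw [List.length_append]; omega) y
  simp only [DFA.mem_accepts, DFA.eval, DFA.evalFrom_of_append, hu, hXp, hpy, hXq] at hmem
  exact hw hmem.symm
end

section
/- Let A be a DFA such that every nontrivial component is a sink and for each nonempty word u and each sink C, u acts non-permutationally on C. Then L(A) is generalized definite: there exists k such that for all x₁, x₂ ∈ Σ^k and y ∈ Σ*, x₁yx₂ ∈ L(A) ⟺ x₁x₂ ∈ L(A). -/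
open Set

namespace DFA

variable {α σ : Type*} (M : DFA α σ)

theorem evalFrom_mem_of_forall_step_mem {C : Set σ} (hC : ∀ q ∈ C, ∀ a, M.step q a ∈ C)
    (w : List α) : ∀ q ∈ C, M.evalFrom q w ∈ C := by
  induction w with
  | nil => exact fun q hq => hq
  | cons a w ih => exact fun q hq => ih _ (hC q hq a)

theorem toNFA_toDFA_evalFrom (S : Set σ) (x : List α) :
    M.toNFA.toDFA.evalFrom S x = (M.evalFrom · x) '' S := by
  change M.toNFA.evalFrom S x = _
  rw [NFA.evalFrom_eq_biUnion_singleton]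
  ext q
  simp only [toNFA_evalFrom_match, mem_iUnion, mem_singleton_iff, mem_image, exists_prop,
    eq_comm]

theorem not_isTrivialComponent_of_evalFrom_eq {p : σ} {u : List α} (hu : u ≠ [])
    (hp : M.evalFrom p u = p) : ¬ IsTrivialComponent M {q | Reach M p q ∧ Reach M q p} := by
  rintro ⟨-, r, hC, hr⟩
  obtain ⟨a, u, rfl⟩ := List.exists_cons_of_ne_nil hu
  have hpC : p ∈ ({q | Reach M p q ∧ Reach M q p} : Set σ) := ⟨⟨[], rfl⟩, ⟨[], rfl⟩⟩
  have hstepC : M.step p a ∈ ({q | Reach M p q ∧ Reach M q p} : Set σ) :=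
    ⟨⟨[a], rfl⟩, ⟨u, hp⟩⟩
  rw [hC, mem_singleton_iff] at hpC hstepC
  exact hr a (hpC ▸ hstepC)

theorem exists_isSink_evalFrom_mem [Fintype σ]
    (hsink : ∀ C : Set σ, IsComponent M C → ¬ IsTrivialComponent M C → IsSink M C)
    (s : σ) (w : List α) (hw : Fintype.card σ ≤ w.length) :
    ∃ C : Set σ, IsSink M C ∧ M.evalFrom s w ∈ C := by
  obtain ⟨p, a, u, c, rfl, -, hu, hsp, hp, -⟩ := M.evalFrom_split (s := s) hw rfl
  have hC := hsink _ ⟨p, rfl⟩ (M.not_isTrivialComponent_of_evalFrom_eq hu hp)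
  refine ⟨_, hC, ?_⟩
  rw [evalFrom_of_append, evalFrom_of_append, hsp, hp]
  exact M.evalFrom_mem_of_forall_step_mem hC.2 c p ⟨⟨[], rfl⟩, ⟨[], rfl⟩⟩

theorem ncard_image_evalFrom_le_one [Fintype σ] {C : Set σ}
    (hC : ∀ q ∈ C, ∀ a, M.step q a ∈ C)
    (hnp : ∀ u : List α, u ≠ [] → NonPermutationalOn (fun q => M.evalFrom q u) C)
    (w : List α) (hw : 2 ^ Fintype.card σ ≤ w.length) :
    ((M.evalFrom · w) '' C).ncard ≤ 1 := by
  obtain ⟨S, a, u, c, rfl, -, hu, hS, huS, -⟩ :=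
    M.toNFA.toDFA.evalFrom_split (s := C) (by rwa [Fintype.card_set]) rfl
  rw [toNFA_toDFA_evalFrom] at hS huS
  have hSC : S ⊆ C :=
    hS ▸ image_subset_iff.2 fun q hq => M.evalFrom_mem_of_forall_step_mem hC a q hq
  have hS1 : S.ncard ≤ 1 := by
    by_contra! hlt
    have hmaps : MapsTo (M.evalFrom · u) S S := fun q hq => huS.subset (mem_image_of_mem _ hq)
    have hbij := (S.toFinite.surjOn_iff_bijOn_of_mapsTo hmaps).1 huS.symm.subset
    exact hnp u hu ⟨S, hSC, hlt, hbij⟩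
  calc ((M.evalFrom · (a ++ u ++ c)) '' C).ncard
      = ((M.evalFrom · c) '' ((M.evalFrom · u) '' ((M.evalFrom · a) '' C))).ncard := by
        simp only [image_image, evalFrom_of_append]
    _ = ((M.evalFrom · c) '' S).ncard := by rw [hS, huS]
    _ ≤ S.ncard := ncard_image_le S.toFinite
    _ ≤ 1 := hS1

end DFA

theorem genDefinite_of_sink_structure {α σ : Type*} [Fintype σ] (M : DFA α σ)
    (hsink : ∀ C : Set σ, IsComponent M C → ¬ IsTrivialComponent M C → IsSink M C)
    (hnp : ∀ u : List α, u ≠ [] → ∀ C : Set σ, IsSink M C →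
      NonPermutationalOn (fun q => M.evalFrom q u) C) :
    ∃ k : ℕ, ∀ x₁ x₂ y : List α, x₁.length = k → x₂.length = k →
      (x₁ ++ y ++ x₂ ∈ M.accepts ↔ x₁ ++ x₂ ∈ M.accepts) := by
  refine ⟨Fintype.card σ + 2 ^ Fintype.card σ, fun x₁ x₂ y h₁ h₂ => ?_⟩
  obtain ⟨C, hC, hx₁⟩ := M.exists_isSink_evalFrom_mem hsink M.start x₁
    (h₁ ▸ Nat.le_add_right _ _)
  have hy : M.evalFrom (M.eval x₁) y ∈ C := M.evalFrom_mem_of_forall_step_mem hC.2 y _ hx₁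
  have hx₂ := M.ncard_image_evalFrom_le_one hC.2 (fun u hu => hnp u hu C hC) x₂
    (h₂ ▸ Nat.le_add_left _ _)
  have heval : M.eval (x₁ ++ y ++ x₂) = M.eval (x₁ ++ x₂) := by
    simp only [DFA.eval, DFA.evalFrom_of_append]
    exact (ncard_le_one (toFinite _)).1 hx₂ _ (mem_image_of_mem _ hy) _ (mem_image_of_mem _ hx₁)
  rw [DFA.mem_accepts, DFA.mem_accepts, heval]
end
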